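/- Let ρ be a congruence on M_n (n ≥ 1). If 1 ρ a (where a denotes the image of the generator a in M_n), then ρ = M_n × M_n. -/

import Mathlib

/-!
From `1 ρ a` we get `1 ρ aⁿ`, hence `1 = db ρ daⁿb = d·0 = 0`. A congruence identifying `1`
with a right zero `0` identifies every `x = x·1` with `x·0 = 0`, so it is the full relation.
-/

inductive Letter | a | b | c | d | z
deriving DecidableEq

abbrev W := FreeMonoid Letter
def A : W := FreeMonoid.of .a
def B : W := FreeMonoid.of .b
def C : W := FreeMonoid.of .c
def D : W := FreeMonoid.of .d
def Z : W := FreeMonoid.of .z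

/-- The defining relations of `M n`, with the zero realized by the letter `z`. -/
def relM (n : ℕ) : W → W → Prop := fun x y =>
  (x = A ^ n * B ∧ y = Z) ∨
  (x = A * C ∧ y = 1) ∨ (x = D * B ∧ y = 1) ∨ (x = D * C ∧ y = 1) ∨
  (∃ k, 1 ≤ k ∧ k ≤ n - 1 ∧ x = D * A ^ k * B ∧ y = 1) ∨
  (∃ l : Letter, x = FreeMonoid.of l * Z ∧ y = Z) ∨
  (∃ l : Letter, x = Z * FreeMonoid.of l ∧ y = Z)

def Mcon (n : ℕ) : Con W := conGen (relM n)

/-- The monoid `M n = Mon⟨a,b,c,d : aⁿb=0, ac=1, db=1, dc=1, daᵏb=1 (1 ≤ k ≤ n-1)⟩`. -/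
abbrev M (n : ℕ) := (Mcon n).Quotient

theorem Con.eq_top_of_rel_one_of_mul_eq_self {N : Type*} [Monoid N] (ρ : Con N) {z : N}
    (hz : ∀ x, x * z = z) (h : ρ 1 z) : ρ = ⊤ := by
  have rel_z (x : N) : ρ x z := by simpa only [mul_one, hz] using ρ.mul (ρ.refl x) h
  exact eq_top_iff.2 fun x y _ => ρ.trans (rel_z x) (ρ.symm (rel_z y))

namespace M

variable {n : ℕ}

lemma mk_eq_of_relM {x y : W} (h : relM n x y) : (x : M n) = y :=
  (Con.eq _).2 (ConGen.Rel.of _ _ h)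

lemma pow_mul_B : ((A : M n) ^ n * (B : M n)) = (Z : M n) :=
  mk_eq_of_relM (Or.inl ⟨rfl, rfl⟩)

lemma D_mul_B : ((D : M n) * (B : M n)) = 1 :=
  mk_eq_of_relM (Or.inr (Or.inr (Or.inl ⟨rfl, rfl⟩)))

lemma mul_Z (x : M n) : x * (Z : M n) = Z := by
  induction x using Con.induction_on with
  | H w =>
    induction w using FreeMonoid.inductionOn' with
    | one => exact one_mul _
    | of_mul l w ih =>
      rw [Con.coe_mul, mul_assoc, ih]
      exact mk_eq_of_relM (Or.inr (Or.inr (Or.inr (Or.inr (Or.inr (Or.inl ⟨l, rfl, rfl⟩))))))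

end M

theorem stmt7_general (n : ℕ) (ρ : Con (M n)) (h : ρ 1 (A : M n)) : ρ = ⊤ := by
  have one_rel_pow : ρ 1 ((A : M n) ^ n) := by simpa only [one_pow] using ρ.pow n h
  have one_rel_Z : ρ 1 (Z : M n) := by
    simpa only [M.D_mul_B, mul_one, mul_assoc, M.pow_mul_B, M.mul_Z] using
      ρ.mul (ρ.mul (ρ.refl (D : M n)) one_rel_pow) (ρ.refl (B : M n))
  exact ρ.eq_top_of_rel_one_of_mul_eq_self M.mul_Z one_rel_Z

/-- If a congruence on `M n` identifies `1` and `a`, it is the full congruence. -/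
theorem stmt7 (n : ℕ) (hn : 1 ≤ n) (ρ : Con (M n)) (h : ρ 1 (A : M n)) : ρ = ⊤ :=
  stmt7_general n ρ h
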